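/- Let N'' be a network with reticulation number k ≥ 2 that has no pendant subtrees and in which every chain has at most 2 leaves. Then N'' has at most 2·3(k-1) = 6(k-1) taxa and at most 5·3(k-1) = 15(k-1) edges. -/

import Mathlib

namespace Phylo

/-- Degree of a vertex (as the number of neighbours). -/
noncomputable def deg (G : SimpleGraph ℕ) (v : ℕ) : ℕ := (G.neighborSet v).ncard

/-- Connectedness on the support (non-isolated vertices). -/
def ConnOn (G : SimpleGraph ℕ) : Prop :=
  ∀ u ∈ G.support, ∀ v ∈ G.support, G.Reachable u v

/-- Reticulation number `|E| - (|V| - 1)`. -/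
noncomputable def retic (G : SimpleGraph ℕ) : ℕ :=
  G.edgeSet.ncard - (G.support.ncard - 1)

/-- `G` with labelling `f` is an unrooted binary phylogenetic network on taxon set
`X`: connected, leaves bijectively labelled by `X`, all internal vertices of
degree 3. -/
def IsUNetwork (X : Type) (G : SimpleGraph ℕ) (f : X → ℕ) : Prop :=
  G.support.Finite ∧ ConnOn G ∧ Function.Injective f ∧
  (∀ x, f x ∈ G.support) ∧ (∀ x, deg G (f x) = 1) ∧
  (∀ v ∈ G.support, v ∉ Set.range f → deg G v = 3)

/-- An unrooted binary phylogenetic tree on `X`. -/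
def IsUTree (X : Type) (G : SimpleGraph ℕ) (f : X → ℕ) : Prop :=
  IsUNetwork X G f ∧ G.IsAcyclic

/-- `G'` is obtained from `G` by subdividing one edge with a fresh vertex. -/
def SubdivStep (G G' : SimpleGraph ℕ) : Prop :=
  ∃ u v w, G.Adj u v ∧ w ∉ G.support ∧
    G' = SimpleGraph.fromEdgeSet ((G.edgeSet \ {s(u, v)}) ∪ {s(u, w), s(w, v)})

/-- `G'` is a subdivision of `G`; equivalently, `G` is obtained from `G'` by
suppressing degree-2 vertices. -/
def IsSubdivisionOf (G' G : SimpleGraph ℕ) : Prop :=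
  Relation.ReflTransGen SubdivStep G G'

/-- Label-preserving isomorphism between two labelled graphs. -/
def LabEq (X : Type) (G H : SimpleGraph ℕ) (f g : X → ℕ) : Prop :=
  ∃ φ : ℕ → ℕ, Set.BijOn φ G.support H.support ∧
    (∀ u ∈ G.support, ∀ v ∈ G.support, (G.Adj u v ↔ H.Adj (φ u) (φ v))) ∧
    (∀ x, φ (f x) = g x)

/-- The network `N` (labelled by `h`) displays the tree `T` (labelled by `f`):
some subdivision of a label-preserving copy of `T` is a subgraph of `N`. -/
def Displays (X : Type) (N : SimpleGraph ℕ) (h : X → ℕ)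
    (T : SimpleGraph ℕ) (f : X → ℕ) : Prop :=
  ∃ T'' T' : SimpleGraph ℕ, LabEq X T T'' f h ∧ IsSubdivisionOf T' T'' ∧ T' ≤ N

/-- One tree bisection and reconnection (TBR) move: delete an edge, subdivide the
resulting forest, reconnect by a new edge, and suppress degree-2 vertices. -/
def TBRStep (T T' : SimpleGraph ℕ) : Prop :=
  ∃ u v, T.Adj u v ∧
    ∃ F', IsSubdivisionOf F' (T.deleteEdges {s(u, v)}) ∧
      ∃ p q, p ≠ q ∧
        IsSubdivisionOf (F' ⊔ SimpleGraph.fromEdgeSet {s(p, q)}) T'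

/-- `TBRle X f k T₁ T₂`: `T₂` can be reached from `T₁` by at most `k` TBR moves
through unrooted binary phylogenetic trees on `X` (labelled by `f`). -/
inductive TBRle (X : Type) (f : X → ℕ) : ℕ → SimpleGraph ℕ → SimpleGraph ℕ → Prop
  | zero (T : SimpleGraph ℕ) : TBRle X f 0 T T
  | succ (k : ℕ) (T T' T'' : SimpleGraph ℕ) :
      TBRStep T T' → IsUTree X T' f → TBRle X f k T' T'' → TBRle X f (k + 1) T T''

/-- The TBR distance between two unrooted binary phylogenetic trees. -/
noncomputable def tbrDist (X : Type) (T₁ T₂ : SimpleGraph ℕ) (f g : X → ℕ) : ℕ :=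
  sInf {k | ∃ T', TBRle X f k T₁ T' ∧ LabEq X T' T₂ f g}

/-- The unrooted hybridization number `h^u(T₁,T₂)`: the minimum reticulation number
of an unrooted binary phylogenetic network on `X` displaying both trees. -/
noncomputable def hu (X : Type) (T₁ T₂ : SimpleGraph ℕ) (f g : X → ℕ) : ℕ :=
  sInf {k | ∃ (N : SimpleGraph ℕ) (h : X → ℕ), IsUNetwork X N h ∧
    Displays X N h T₁ f ∧ Displays X N h T₂ g ∧ retic N = k}

end Phylo

private lemma walkClosed {α : Type*} {G : SimpleGraph α} {S : Set α}
    (hS : ∀ u ∈ S, ∀ v, G.Adj u v → v ∈ S) {a b : α} (w : G.Walk a b) :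
    a ∈ S → b ∈ S := by
  induction w with
  | nil => exact id
  | cons h p ih => exact fun ha => ih (hS _ ha _ h)

private lemma reachClosed {α : Type*} {G : SimpleGraph α} {S : Set α}
    (hS : ∀ u ∈ S, ∀ v, G.Adj u v → v ∈ S) {a b : α} (h : G.Reachable a b)
    (ha : a ∈ S) : b ∈ S := by
  obtain ⟨w⟩ := h
  exact walkClosed hS w ha

/-- Kernel bound for Unrooted Tree Containment: if an unrooted binary phylogenetic
network `N''` with reticulation number `k ≥ 2` has no pendant subtrees (no
detachable tree component carrying ≥ 2 taxa) and no chain of 3 taxa, then `N''`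
has at most `2·3(k-1) = 6(k-1)` taxa and at most `5·3(k-1) = 15(k-1)` edges. -/
theorem stmt15 (X : Type) [Fintype X] (G : SimpleGraph ℕ) (f : X → ℕ)
    (hnet : Phylo.IsUNetwork X G f)
    (k : ℕ) (hk : k = Phylo.retic G) (h2 : 2 ≤ k)
    -- no pendant subtrees: deleting any edge never detaches an acyclic component
    -- containing two or more taxa
    (hNoPendant : ∀ u v, G.Adj u v → ∀ S : Set ℕ,
      S = {w | (G.deleteEdges {s(u, v)}).Reachable u w} →
      ((G.deleteEdges {s(u, v)}).induce S).IsAcyclic →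
      (S ∩ Set.range f).ncard ≤ 1)
    -- every chain has at most 2 leaves: there is no chain of 3 taxa
    (hNoChain : ¬ ∃ (x₁ x₂ x₃ : X) (p₁ p₂ p₃ : ℕ),
      x₁ ≠ x₂ ∧ x₂ ≠ x₃ ∧ x₁ ≠ x₃ ∧ p₁ ≠ p₂ ∧ p₂ ≠ p₃ ∧ p₁ ≠ p₃ ∧
      G.Adj p₁ (f x₁) ∧ G.Adj p₂ (f x₂) ∧ G.Adj p₃ (f x₃) ∧
      G.Adj p₁ p₂ ∧ G.Adj p₂ p₃) :
    Fintype.card X ≤ 6 * (k - 1) ∧ G.edgeSet.ncard ≤ 15 * (k - 1) := by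
  classical
  obtain ⟨hfin, hconn, hinj, hmem, hdeg1, hdeg3⟩ := hnet
  -- finiteness of neighborhoods, adjacency pairs, edges
  have hnb : ∀ v : ℕ, G.neighborSet v ⊆ G.support := by
    intro v w hw
    exact G.mem_support.mpr ⟨v, hw.symm⟩
  have hnbf : ∀ v : ℕ, (G.neighborSet v).Finite := fun v => hfin.subset (hnb v)
  have hDsub : {p : ℕ × ℕ | G.Adj p.1 p.2} ⊆ G.support ×ˢ G.support := by
    rintro ⟨a, b⟩ h
    exact ⟨G.mem_support.mpr ⟨b, h⟩, G.mem_support.mpr ⟨a, h.symm⟩⟩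
  have hDfin : Set.Finite {p : ℕ × ℕ | G.Adj p.1 p.2} := (hfin.prod hfin).subset hDsub
  have hEfin : G.edgeSet.Finite := by
    refine (hDfin.image (fun p => s(p.1, p.2))).subset ?_
    intro e he
    induction e using Sym2.ind with
    | _ a b => exact ⟨(a, b), he, rfl⟩
  set V : Finset ℕ := hfin.toFinset with hV
  set E : Finset (Sym2 ℕ) := hEfin.toFinset with hE
  set D : Finset (ℕ × ℕ) := hDfin.toFinset with hD
  have hmemV : ∀ v : ℕ, v ∈ V ↔ v ∈ G.support := fun v => hfin.mem_toFinset
  have hmemE : ∀ e : Sym2 ℕ, e ∈ E ↔ e ∈ G.edgeSet := fun e => hEfin.mem_toFinset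
  have hmemD : ∀ p : ℕ × ℕ, p ∈ D ↔ G.Adj p.1 p.2 := fun p => hDfin.mem_toFinset
  -- fiber cards = degrees
  have fiber_fst : ∀ v : ℕ, (D.filter (fun p => p.1 = v)).card = Phylo.deg G v := by
    intro v
    rw [Phylo.deg, Set.ncard_eq_toFinset_card _ (hnbf v)]
    refine Finset.card_bij (fun p _ => p.2) ?_ ?_ ?_
    · intro p hp
      rw [Finset.mem_filter, hmemD] at hp
      rw [Set.Finite.mem_toFinset]
      exact hp.2 ▸ hp.1
    · intro p hp q hq hpq
      rw [Finset.mem_filter] at hp hq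
      exact Prod.ext (hp.2.trans hq.2.symm) hpq
    · intro w hw
      rw [Set.Finite.mem_toFinset] at hw
      exact ⟨(v, w), by rw [Finset.mem_filter, hmemD]; exact ⟨hw, rfl⟩, rfl⟩
  have fiber_snd : ∀ v : ℕ, (D.filter (fun p => p.2 = v)).card = Phylo.deg G v := by
    intro v
    rw [Phylo.deg, Set.ncard_eq_toFinset_card _ (hnbf v)]
    refine Finset.card_bij (fun p _ => p.1) ?_ ?_ ?_
    · intro p hp
      rw [Finset.mem_filter, hmemD] at hp
      rw [Set.Finite.mem_toFinset]
      exact SimpleGraph.mem_neighborSet _ _ _ |>.mpr (hp.2 ▸ hp.1.symm)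
    · intro p hp q hq hpq
      rw [Finset.mem_filter] at hp hq
      exact Prod.ext hpq (hp.2.trans hq.2.symm)
    · intro w hw
      rw [Set.Finite.mem_toFinset] at hw
      exact ⟨(w, v), by rw [Finset.mem_filter, hmemD]; exact ⟨hw.symm, rfl⟩, rfl⟩
  -- handshake
  have handshake : ∑ v ∈ V, Phylo.deg G v = 2 * E.card := by
    have hDV : ∀ p ∈ D, p.1 ∈ V := by
      intro p hp
      rw [hmemD] at hp
      rw [hmemV]
      exact G.mem_support.mpr ⟨p.2, hp⟩
    have hsum1 : D.card = ∑ v ∈ V, (D.filter (fun p => p.1 = v)).card :=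
      Finset.card_eq_sum_card_fiberwise hDV
    have hDE : ∀ p ∈ D, s(p.1, p.2) ∈ E := by
      intro p hp
      rw [hmemD] at hp
      rw [hmemE]
      exact hp
    have hsum2 : D.card = ∑ e ∈ E, (D.filter (fun p => s(p.1, p.2) = e)).card :=
      Finset.card_eq_sum_card_fiberwise hDE
    have hfib2 : ∀ e ∈ E, (D.filter (fun p => s(p.1, p.2) = e)).card = 2 := by
      intro e he
      induction e using Sym2.ind with
      | _ a b =>
        rw [hmemE, SimpleGraph.mem_edgeSet] at he
        have hset : D.filter (fun p => s(p.1, p.2) = s(a, b)) = {(a, b), (b, a)} := by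
          ext ⟨u, w⟩
          rw [Finset.mem_filter, hmemD]
          simp only [Finset.mem_insert, Finset.mem_singleton, Prod.mk.injEq, Sym2.eq_iff]
          constructor
          · rintro ⟨hadj, (⟨rfl, rfl⟩ | ⟨rfl, rfl⟩)⟩
            · exact Or.inl ⟨rfl, rfl⟩
            · exact Or.inr ⟨rfl, rfl⟩
          · rintro (⟨rfl, rfl⟩ | ⟨rfl, rfl⟩)
            · exact ⟨he, Or.inl ⟨rfl, rfl⟩⟩
            · exact ⟨he.symm, Or.inr ⟨rfl, rfl⟩⟩
        rw [hset, Finset.card_insert_of_notMem, Finset.card_singleton]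
        simp only [Finset.mem_singleton, Prod.mk.injEq, not_and]
        intro h
        exact absurd h he.ne
    calc ∑ v ∈ V, Phylo.deg G v = ∑ v ∈ V, (D.filter (fun p => p.1 = v)).card := by
          exact Finset.sum_congr rfl fun v _ => (fiber_fst v).symm
      _ = D.card := hsum1.symm
      _ = ∑ e ∈ E, (D.filter (fun p => s(p.1, p.2) = e)).card := hsum2
      _ = ∑ _e ∈ E, 2 := Finset.sum_congr rfl hfib2
      _ = 2 * E.card := by rw [Finset.sum_const, smul_eq_mul, mul_comm]
  -- unique neighbor of each leaf
  have huniq : ∀ x : X, ∃ p, G.neighborSet (f x) = {p} := by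
    intro x
    exact Set.ncard_eq_one.mp (hdeg1 x)
  choose pa hpa using huniq
  have hadj_pa : ∀ x, G.Adj (f x) (pa x) := by
    intro x
    have : pa x ∈ G.neighborSet (f x) := by rw [hpa x]; rfl
    exact this
  have hpa_unique : ∀ x w, G.Adj (f x) w → w = pa x := by
    intro x w h
    have : w ∈ G.neighborSet (f x) := h
    rw [hpa x] at this
    exact this
  -- cardinality facts
  have hmE : G.edgeSet.ncard = E.card := Set.ncard_eq_toFinset_card _ hEfin
  have hnV : G.support.ncard = V.card := Set.ncard_eq_toFinset_card _ hfin
  have hm2 : 2 ≤ E.card := by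
    have h2' : 2 ≤ E.card - (V.card - 1) := by
      rw [hk, Phylo.retic, hmE, hnV] at h2
      exact h2
    omega
  -- a leaf's neighbor is internal
  have hpa_not_leaf : ∀ x, pa x ∉ Set.range f := by
    rintro x ⟨y, hy⟩
    have h1 : G.Adj (f y) (f x) := hy ▸ (hadj_pa x).symm
    have h2' : f x = pa y := hpa_unique y (f x) h1
    have hclosed : ∀ u ∈ ({f x, f y} : Set ℕ), ∀ v, G.Adj u v → v ∈ ({f x, f y} : Set ℕ) := by
      rintro u (rfl | rfl) v hadj
      · have := hpa_unique x v hadj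
        right; rw [this, ← hy]; rfl
      · have := hpa_unique y v hadj
        left; rw [this, ← h2']
    have hsub : G.support ⊆ {f x, f y} := by
      intro u hu
      exact reachClosed hclosed (hconn (f x) (hmem x) u hu) (Or.inl rfl)
    have hesub : G.edgeSet ⊆ {s(f x, f y)} := by
      intro e he
      induction e using Sym2.ind with
      | _ a b =>
        rw [SimpleGraph.mem_edgeSet] at he
        have ha := hsub (G.mem_support.mpr ⟨b, he⟩)
        have hb := hsub (G.mem_support.mpr ⟨a, he.symm⟩)
        rcases ha with rfl | rfl <;> rcases hb with rfl | rfl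
        · exact absurd rfl he.ne
        · rfl
        · rw [Set.mem_singleton_iff, Sym2.eq_swap]
        · exact absurd rfl he.ne
    have : E.card ≤ 1 := by
      rw [← hmE]
      calc G.edgeSet.ncard ≤ ({s(f x, f y)} : Set (Sym2 ℕ)).ncard :=
            Set.ncard_le_ncard hesub (Set.finite_singleton _)
        _ = 1 := Set.ncard_singleton _
    omega
  -- parent map is injective (no vertex has two leaf neighbours)
  have hpa_inj : Function.Injective pa := by
    intro x y hxy
    by_contra hne
    have hfx : f x ≠ f y := fun h => hne (hinj h)
    have hpx : G.Adj (pa x) (f x) := (hadj_pa x).symm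
    have hpy : G.Adj (pa x) (f y) := hxy ▸ (hadj_pa y).symm
    have hpnl : pa x ∉ Set.range f := hpa_not_leaf x
    have hpsupp : pa x ∈ G.support := G.mem_support.mpr ⟨f x, hpx⟩
    have hp3 : (G.neighborSet (pa x)).ncard = 3 := hdeg3 _ hpsupp hpnl
    have hsub2 : ({f x, f y} : Set ℕ) ⊆ G.neighborSet (pa x) := by
      rintro z (rfl | rfl)
      exacts [hpx, hpy]
    obtain ⟨q, hqN, hq2⟩ : ∃ q ∈ G.neighborSet (pa x), q ∉ ({f x, f y} : Set ℕ) := by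
      apply Set.exists_of_ssubset
      refine ⟨hsub2, fun hsup => ?_⟩
      have h1 := Set.ncard_le_ncard hsup (Set.Finite.insert _ (Set.finite_singleton _))
      rw [hp3, Set.ncard_pair hfx] at h1
      omega
    have hqx : q ≠ f x := fun h => hq2 (Or.inl h)
    have hqy : q ≠ f y := fun h => hq2 (Or.inr h)
    have hadjpq : G.Adj (pa x) q := hqN
    have hNp : G.neighborSet (pa x) = {f x, f y, q} := by
      refine (Set.eq_of_subset_of_ncard_le ?_ ?_ (hnbf _)).symm
      · rintro z (rfl | rfl | rfl)
        exacts [hpx, hpy, hqN]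
      · rw [hp3]
        have h3 : ({f x, f y, q} : Set ℕ).ncard = 3 := by
          rw [Set.ncard_insert_of_notMem (by rintro (h | h); exacts [hfx h, hqx h.symm])
            (Set.Finite.insert _ (Set.finite_singleton _)), Set.ncard_pair (Ne.symm hqy)]
        omega
    set Gd := G.deleteEdges {s(pa x, q)} with hGd
    set S : Set ℕ := {w | Gd.Reachable (pa x) w} with hSdef
    have hclosed : ∀ u ∈ ({pa x, f x, f y} : Set ℕ), ∀ v, Gd.Adj u v →
        v ∈ ({pa x, f x, f y} : Set ℕ) := by
      rintro u hu v hadj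
      rw [hGd, SimpleGraph.deleteEdges_adj] at hadj
      obtain ⟨hadj, hne'⟩ := hadj
      rcases hu with rfl | rfl | rfl
      · have hv : v ∈ G.neighborSet (pa x) := hadj
        rw [hNp] at hv
        rcases hv with rfl | rfl | rfl
        · right; left; rfl
        · right; right; rfl
        · exact (hne' rfl).elim
      · have hv := hpa_unique x v hadj
        left; rw [hv]
      · have hv := hpa_unique y v hadj
        left; rw [hv, ← hxy]
    have hSsub : S ⊆ {pa x, f x, f y} := by
      intro w hw
      exact reachClosed hclosed hw (Or.inl rfl)
    have hedge_ok : ∀ z, z ≠ q → G.Adj (pa x) z → Gd.Adj (pa x) z := by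
      intro z hzq hadj
      rw [hGd, SimpleGraph.deleteEdges_adj]
      refine ⟨hadj, ?_⟩
      simp only [Set.mem_singleton_iff, Sym2.eq_iff]
      rintro (⟨-, h⟩ | ⟨h, -⟩)
      · exact hzq h
      · exact hadjpq.ne h
    have hpS : pa x ∈ S := SimpleGraph.Reachable.refl _
    have hfxS : f x ∈ S := (hedge_ok (f x) (Ne.symm hqx) hpx).reachable
    have hfyS : f y ∈ S := (hedge_ok (f y) (Ne.symm hqy) hpy).reachable
    have hacyc : (Gd.induce S).IsAcyclic := by
      intro v c hc
      have hlen : 3 ≤ c.length := hc.three_le_length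
      have hnodup : c.edges.Nodup := hc.edges_nodup
      have hS3 : ∀ a : S, (a : ℕ) = pa x ∨ (a : ℕ) = f x ∨ (a : ℕ) = f y := fun a => hSsub a.2
      have hnoleafleaf : ∀ a b : X, ¬ G.Adj (f a) (f b) := by
        intro a b hab
        have := hpa_unique a (f b) hab
        exact hpa_not_leaf a (this ▸ ⟨b, rfl⟩)
      have hmm : ∀ e ∈ c.edges,
          e ∈ ({s((⟨pa x, hpS⟩ : S), (⟨f x, hfxS⟩ : S)),
                s((⟨pa x, hpS⟩ : S), (⟨f y, hfyS⟩ : S))} : Finset (Sym2 S)) := by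
        intro e he
        have hee := c.edges_subset_edgeSet he
        induction e using Sym2.ind with
        | _ a b =>
          rw [SimpleGraph.mem_edgeSet] at hee
          have hab : Gd.Adj (a : ℕ) (b : ℕ) := hee
          have hGab : G.Adj (a : ℕ) (b : ℕ) := by
            rw [hGd, SimpleGraph.deleteEdges_adj] at hab
            exact hab.1
          simp only [Finset.mem_insert, Finset.mem_singleton]
          rcases hS3 a with ha | ha | ha <;> rcases hS3 b with hb | hb | hb
          · exact (hGab.ne (ha.trans hb.symm)).elim
          · left
            rw [Sym2.eq_iff]
            exact Or.inl ⟨Subtype.ext ha, Subtype.ext hb⟩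
          · right
            rw [Sym2.eq_iff]
            exact Or.inl ⟨Subtype.ext ha, Subtype.ext hb⟩
          · left
            rw [Sym2.eq_iff]
            exact Or.inr ⟨Subtype.ext ha, Subtype.ext hb⟩
          · exact (hnoleafleaf x x (by rwa [ha, hb] at hGab)).elim
          · exact (hnoleafleaf x y (by rwa [ha, hb] at hGab)).elim
          · right
            rw [Sym2.eq_iff]
            exact Or.inr ⟨Subtype.ext ha, Subtype.ext hb⟩
          · exact (hnoleafleaf y x (by rwa [ha, hb] at hGab)).elim
          · exact (hnoleafleaf y y (by rwa [ha, hb] at hGab)).elim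
      have hcard : c.edges.length ≤ 2 := by
        have h1 : c.edges.toFinset ⊆
            ({s((⟨pa x, hpS⟩ : S), (⟨f x, hfxS⟩ : S)),
              s((⟨pa x, hpS⟩ : S), (⟨f y, hfyS⟩ : S))} : Finset (Sym2 S)) :=
          fun e he => hmm e (List.mem_toFinset.mp he)
        have h2 := Finset.card_le_card h1
        rw [List.toFinset_card_of_nodup hnodup] at h2
        exact h2.trans ((Finset.card_insert_le _ _).trans (by simp))
      rw [c.length_edges] at hcard
      omega
    have hle := hNoPendant (pa x) q hadjpq S (by rw [hSdef, hGd]) (by rw [← hGd]; exact hacyc)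
    have hge : 2 ≤ (S ∩ Set.range f).ncard := by
      have hsub' : ({f x, f y} : Set ℕ) ⊆ S ∩ Set.range f := by
        rintro z (rfl | rfl)
        exacts [⟨hfxS, ⟨x, rfl⟩⟩, ⟨hfyS, ⟨y, rfl⟩⟩]
      have hfinS : (S ∩ Set.range f).Finite := by
        refine (Set.Finite.insert (pa x) (Set.Finite.insert (f x) (Set.finite_singleton (f y)))).subset ?_
        intro z hz
        exact hSsub hz.1
      calc 2 = ({f x, f y} : Set ℕ).ncard := (Set.ncard_pair hfx).symm
        _ ≤ _ := Set.ncard_le_ncard hsub' hfinS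
    omega
  -- partition of V into leaves, parents, and other internal vertices
  set Lf : Finset ℕ := V.filter (fun v => v ∈ Set.range f) with hLfdef
  set P : Finset ℕ := V.filter (fun v => v ∉ Set.range f ∧ ∃ x : X, G.Adj v (f x)) with hPdef
  set Q : Finset ℕ := V.filter (fun v => v ∉ Set.range f ∧ ¬∃ x : X, G.Adj v (f x)) with hQdef
  have hpart : Lf.card + (P.card + Q.card) = V.card := by
    have h1 : Lf.card + (V.filter (fun v => v ∉ Set.range f)).card = V.card :=
      Finset.card_filter_add_card_filter_not _
    have h2 : P.card + Q.card = (V.filter (fun v => v ∉ Set.range f)).card := by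
      have h3 := Finset.card_filter_add_card_filter_not
        (s := V.filter (fun v => v ∉ Set.range f)) (fun v => ∃ x : X, G.Adj v (f x))
      rw [Finset.filter_filter, Finset.filter_filter] at h3
      exact h3
    omega
  have hLcard : Lf.card = Fintype.card X := by
    have himg : Lf = Finset.univ.image f := by
      ext v
      rw [hLfdef, Finset.mem_filter, hmemV]
      simp only [Finset.mem_image, Finset.mem_univ, true_and, Set.mem_range]
      constructor
      · rintro ⟨-, z, rfl⟩
        exact ⟨z, rfl⟩
      · rintro ⟨z, rfl⟩
        exact ⟨hmem z, z, rfl⟩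
    rw [himg, Finset.card_image_of_injective _ hinj, Finset.card_univ]
  have hPcard : P.card = Fintype.card X := by
    rw [← Finset.card_univ (α := X)]
    refine (Finset.card_bij (fun x _ => pa x) ?_ ?_ ?_).symm
    · intro x _
      rw [hPdef, Finset.mem_filter, hmemV]
      exact ⟨G.mem_support.mpr ⟨f x, (hadj_pa x).symm⟩, hpa_not_leaf x, ⟨x, (hadj_pa x).symm⟩⟩
    · intro a _ b _ hab
      exact hpa_inj hab
    · intro v hv
      rw [hPdef, Finset.mem_filter] at hv
      obtain ⟨-, -, z, hz⟩ := hv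
      exact ⟨z, Finset.mem_univ z, (hpa_unique z v hz.symm).symm⟩
  -- every parent has a neighbour in Q
  have hPQadj : ∀ v ∈ P, ∃ q ∈ Q, G.Adj v q := by
    intro v hv
    rw [hPdef, Finset.mem_filter, hmemV] at hv
    obtain ⟨hvsupp, hvnl, x, hvx⟩ := hv
    have hvpa : v = pa x := hpa_unique x v hvx.symm
    have hv3 : (G.neighborSet v).ncard = 3 := hdeg3 v hvsupp hvnl
    -- pick two neighbours besides f x
    have hfxN : f x ∈ G.neighborSet v := hvx
    obtain ⟨a, haN, hax⟩ : ∃ a ∈ G.neighborSet v, a ∉ ({f x} : Set ℕ) := by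
      apply Set.exists_of_ssubset
      refine ⟨fun z hz => hz ▸ hfxN, fun hsup => ?_⟩
      have h1 := Set.ncard_le_ncard hsup (Set.finite_singleton _)
      rw [hv3, Set.ncard_singleton] at h1
      omega
    obtain ⟨b, hbN, hb2⟩ : ∃ b ∈ G.neighborSet v, b ∉ ({f x, a} : Set ℕ) := by
      apply Set.exists_of_ssubset
      refine ⟨?_, fun hsup => ?_⟩
      · rintro z (rfl | rfl)
        exacts [hfxN, haN]
      · have h1 := Set.ncard_le_ncard hsup (Set.Finite.insert _ (Set.finite_singleton _))
        have h2' : ({f x, a} : Set ℕ).ncard ≤ 2 := by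
          refine le_trans (Set.ncard_insert_le _ _) ?_
          rw [Set.ncard_singleton]
        rw [hv3] at h1
        omega
    have haf : a ≠ f x := fun h => hax (by rw [h]; rfl)
    have hbf : b ≠ f x := fun h => hb2 (Or.inl h)
    have hba : b ≠ a := fun h => hb2 (Or.inr h)
    -- neither a nor b is a leaf
    have hnotleaf : ∀ c : ℕ, c ∈ G.neighborSet v → c ≠ f x → c ∉ Set.range f := by
      rintro c hcN hcfx ⟨y, rfl⟩
      have : v = pa y := hpa_unique y v (SimpleGraph.mem_neighborSet _ _ _ |>.mp hcN).symm
      exact hcfx (congrArg f (hpa_inj (this ▸ hvpa)) ▸ rfl)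
    have hanl : a ∉ Set.range f := hnotleaf a haN haf
    have hbnl : b ∉ Set.range f := hnotleaf b hbN hbf
    have haV : a ∈ V := (hmemV a).mpr (hnb v haN)
    have hbV : b ∈ V := (hmemV b).mpr (hnb v hbN)
    -- not both a and b are parents
    by_cases hap : ∃ y : X, G.Adj a (f y)
    · by_cases hbp : ∃ z : X, G.Adj b (f z)
      · exfalso
        obtain ⟨y, hay⟩ := hap
        obtain ⟨z, hbz⟩ := hbp
        have hapa : a = pa y := hpa_unique y a hay.symm
        have hbpa : b = pa z := hpa_unique z b hbz.symm
        have hav : a ≠ v := (G.mem_neighborSet _ _ |>.mp haN).ne'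
        have hbv : b ≠ v := (G.mem_neighborSet _ _ |>.mp hbN).ne'
        have hyx : y ≠ x := fun h => hav (by rw [hapa, h, ← hvpa])
        have hzx : z ≠ x := fun h => hbv (by rw [hbpa, h, ← hvpa])
        have hyz : y ≠ z := fun h => hba (by rw [hapa, hbpa, h])
        exact hNoChain ⟨y, x, z, a, v, b, hyx, hzx.symm, hyz, hav, hbv.symm, hba.symm,
          hay, hvx, hbz, haN.symm, hbN⟩
      · refine ⟨b, ?_, hbN⟩
        rw [hQdef, Finset.mem_filter]
        exact ⟨hbV, hbnl, hbp⟩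
    · refine ⟨a, ?_, haN⟩
      rw [hQdef, Finset.mem_filter]
      exact ⟨haV, hanl, hap⟩
  -- double counting: |P| ≤ 3 |Q|
  have hkey : P.card ≤ 3 * Q.card := by
    set F : Finset (ℕ × ℕ) := D.filter (fun pr => pr.1 ∈ P ∧ pr.2 ∈ Q) with hFdef
    have hlow : P.card ≤ F.card := by
      have hFsum : F.card = ∑ v ∈ P, (F.filter (fun pr => pr.1 = v)).card := by
        refine Finset.card_eq_sum_card_fiberwise ?_
        intro pr hpr
        rw [Finset.mem_coe, hFdef, Finset.mem_filter] at hpr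
        exact hpr.2.1
      rw [hFsum]
      calc P.card = ∑ _v ∈ P, 1 := by rw [Finset.sum_const, smul_eq_mul, mul_one]
        _ ≤ ∑ v ∈ P, (F.filter (fun pr => pr.1 = v)).card := by
            refine Finset.sum_le_sum ?_
            intro v hv
            obtain ⟨q, hq, hadj⟩ := hPQadj v hv
            refine Finset.card_pos.mpr ⟨(v, q), ?_⟩
            rw [Finset.mem_filter, hFdef, Finset.mem_filter, hmemD]
            exact ⟨⟨hadj, hv, hq⟩, rfl⟩
    have hup : F.card ≤ 3 * Q.card := by
      have hFsum : F.card = ∑ q ∈ Q, (F.filter (fun pr => pr.2 = q)).card := by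
        refine Finset.card_eq_sum_card_fiberwise ?_
        intro pr hpr
        rw [Finset.mem_coe, hFdef, Finset.mem_filter] at hpr
        exact hpr.2.2
      rw [hFsum]
      calc ∑ q ∈ Q, (F.filter (fun pr => pr.2 = q)).card ≤ ∑ q ∈ Q, 3 := by
            refine Finset.sum_le_sum ?_
            intro q hq
            have hsub' : F.filter (fun pr => pr.2 = q) ⊆ D.filter (fun pr => pr.2 = q) := by
              intro pr hpr
              rw [Finset.mem_filter] at hpr ⊢
              rw [hFdef, Finset.mem_filter] at hpr
              exact ⟨hpr.1.1, hpr.2⟩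
            have hq3 : Phylo.deg G q = 3 := by
              rw [hQdef, Finset.mem_filter, hmemV] at hq
              exact hdeg3 q hq.1 hq.2.1
            calc (F.filter (fun pr => pr.2 = q)).card
                ≤ (D.filter (fun pr => pr.2 = q)).card := Finset.card_le_card hsub'
              _ = 3 := by rw [fiber_snd q, hq3]
        _ = 3 * Q.card := by rw [Finset.sum_const, smul_eq_mul, mul_comm]
    exact hlow.trans hup
  -- degree sum by parts
  have hdegsum : 2 * E.card = Lf.card + 3 * (P.card + Q.card) := by
    have hsplit1 : ∑ v ∈ Lf, Phylo.deg G v + ∑ v ∈ V.filter (fun v => ¬ v ∈ Set.range f),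
        Phylo.deg G v = ∑ v ∈ V, Phylo.deg G v :=
      Finset.sum_filter_add_sum_filter_not V _ _
    have hLsum : ∑ v ∈ Lf, Phylo.deg G v = Lf.card := by
      rw [Finset.sum_congr rfl (fun v hv => ?_), Finset.sum_const, smul_eq_mul, mul_one]
      rw [hLfdef, Finset.mem_filter] at hv
      obtain ⟨z, rfl⟩ := hv.2
      exact hdeg1 z
    have hIsum : ∑ v ∈ V.filter (fun v => ¬ v ∈ Set.range f), Phylo.deg G v =
        3 * (P.card + Q.card) := by
      rw [Finset.sum_congr rfl (fun v hv => ?_), Finset.sum_const, smul_eq_mul]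
      · have h2' : P.card + Q.card = (V.filter (fun v => v ∉ Set.range f)).card := by
          have h3 := Finset.card_filter_add_card_filter_not
            (s := V.filter (fun v => v ∉ Set.range f)) (fun v => ∃ x : X, G.Adj v (f x))
          rw [Finset.filter_filter, Finset.filter_filter] at h3
          exact h3
        rw [h2', mul_comm]
      · rw [Finset.mem_filter, hmemV] at hv
        exact hdeg3 v hv.1 hv.2
    omega
  -- support is nonempty
  have hn1 : 1 ≤ V.card := by
    refine Finset.card_pos.mpr ?_
    obtain ⟨e, he⟩ := Finset.card_pos.mp (by omega : 0 < E.card)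
    rw [hmemE] at he
    induction e using Sym2.ind with
    | _ a b =>
      rw [SimpleGraph.mem_edgeSet] at he
      exact ⟨a, (hmemV a).mpr (G.mem_support.mpr ⟨b, he⟩)⟩
  -- final arithmetic
  have hk' : k = E.card - (V.card - 1) := by
    rw [hk, Phylo.retic, hmE, hnV]
  rw [hmE]
  have hL := hLcard
  have hP' := hPcard
  constructor <;> omega
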